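/- arXiv:1512.03678 — 3 statements merged into one kernel-verified Lean document; each statement's English description precedes it below -/
import Mathlib

section
/- Let R be a commutative ring and α, β ∈ R, and for r ≥ 0 set a_r = ∑_{i=0}^{r} α^i β^{r-i}. Then in the formal power series ring R[[X]] one has the identity (1 − α²X)(1 − αβX)²(1 − β²X) · ∑_{r≥0} a_r² X^r = 1 − α²β²X². (The quartic on the left is the local Euler factor of the Rankin–Selberg convolution f ⊗ f at ℓ.) -/
/-!
Since `a` is the complete homogeneous sequence of `α, β`, it satisfies the linear recurrence
with characteristic roots `α, β`; hence `a_r²` satisfies the one with roots `α², αβ, β²`. So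
`(1 - α²X)(1 - αβX)(1 - β²X) · ∑ a_r² X^r` is a polynomial of degree at most two, read off from
`a_0, a_1, a_2`: it is `1 + αβX`. Multiplying by the remaining factor `1 - αβX` gives the claim.
-/

open PowerSeries

theorem geom_sum₂_recurrence {R : Type*} [CommRing R] (x y : R) (n : ℕ) :
    ∑ i ∈ Finset.range (n + 3), x ^ i * y ^ (n + 2 - i) =
      (x + y) * ∑ i ∈ Finset.range (n + 2), x ^ i * y ^ (n + 1 - i) -
        x * y * ∑ i ∈ Finset.range (n + 1), x ^ i * y ^ (n - i) := by
  have h₂ := geom_sum₂_succ_eq x y (n := n + 2)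
  have h₁ := geom_sum₂_succ_eq x y (n := n + 1)
  simp only [Nat.add_sub_cancel, Nat.reduceSubDiff] at h₁ h₂
  linear_combination h₂ - x * h₁

theorem sq_add_three_of_recurrence {R : Type*} [CommRing R] {a : ℕ → R} {s p : R}
    (ha : ∀ n, a (n + 2) = s * a (n + 1) - p * a n) (n : ℕ) :
    a (n + 3) ^ 2 = (s ^ 2 - p) * a (n + 2) ^ 2 - p * (s ^ 2 - p) * a (n + 1) ^ 2
      + p ^ 3 * a n ^ 2 := by
  rw [ha (n + 1), ha n]
  ring

theorem cubic_mul_mk_of_recurrence {R : Type*} [CommRing R] {b : ℕ → R} {c₁ c₂ c₃ : R}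
    (hb : ∀ n, b (n + 3) = c₁ * b (n + 2) - c₂ * b (n + 1) + c₃ * b n) :
    (1 - C c₁ * X + C c₂ * X ^ 2 - C c₃ * X ^ 3) * mk b =
      C (b 0) + C (b 1 - c₁ * b 0) * X + C (b 2 - c₁ * b 1 + c₂ * b 0) * X ^ 2 := by
  ext (_ | _ | _ | n)
  iterate 3 simp [sub_mul, add_mul, mul_assoc, coeff_X_pow_mul', coeff_X_pow]
  simp only [sub_mul, add_mul, one_mul, mul_assoc, map_sub, map_add, map_mul, coeff_mk,
    coeff_C_mul, coeff_succ_C, coeff_succ_X_mul, coeff_succ_mul_X, coeff_X_pow_mul', coeff_X_pow,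
    le_add_iff_nonneg_left, zero_le, ↓reduceIte, Nat.reduceSubDiff, Nat.reduceEqDiff, mul_zero,
    sub_self, add_zero]
  linear_combination hb n

/-- For a commutative ring `R` and `α β : R`, with
`a r = ∑_{i=0}^{r} α^i β^(r-i)`, we have in `R[[X]]`:
`(1 - α²X)(1 - αβX)²(1 - β²X) · ∑_{r≥0} a_r² X^r = 1 - α²β²X²`,
the quartic being the local Euler factor of the Rankin–Selberg convolution `f ⊗ f`. -/
theorem rankin_selberg_local_factor_squared_coeffs
    (R : Type*) [CommRing R] (α β : R)
    (a : ℕ → R) (ha : ∀ r : ℕ, a r = ∑ i ∈ Finset.range (r + 1), α ^ i * β ^ (r - i)) :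
    (1 - PowerSeries.C (α ^ 2) * PowerSeries.X) *
      (1 - PowerSeries.C (α * β) * PowerSeries.X) ^ 2 *
      (1 - PowerSeries.C (β ^ 2) * PowerSeries.X) *
      PowerSeries.mk (fun r => a r ^ 2) =
    1 - PowerSeries.C (α ^ 2 * β ^ 2) * PowerSeries.X ^ 2 := by
  have hrec (n : ℕ) : a (n + 2) = (α + β) * a (n + 1) - α * β * a n := by
    simpa only [ha] using geom_sum₂_recurrence α β n
  have h₀ : a 0 = 1 := by simp [ha]
  have h₁ : a 1 = α + β := by simp [ha, Finset.sum_range_succ, add_comm]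
  have hcubic := cubic_mul_mk_of_recurrence (b := fun r => a r ^ 2)
    (sq_add_three_of_recurrence hrec)
  simp only [hrec 0, h₀, h₁] at hcubic
  calc _ = (1 - C (α * β) * X) *
        ((1 - C ((α + β) ^ 2 - α * β) * X + C (α * β * ((α + β) ^ 2 - α * β)) * X ^ 2
          - C ((α * β) ^ 3) * X ^ 3) * mk fun r => a r ^ 2) := by
        simp only [map_sub, map_mul, map_pow, map_add]
        ring
    _ = _ := by
        rw [hcubic]
        simp only [map_sub, map_mul, map_pow, map_add, map_one]
        ring
end

section
/- For every s ∈ ℂ with Re(s) > k, the family of local factors ℓ ↦ [(1 − χ(ℓ)α_ℓ² ℓ^{−s})(1 − χ(ℓ)α_ℓβ_ℓ ℓ^{−s})(1 − χ(ℓ)β_ℓ² ℓ^{−s})]^{−1}, indexed by primes ℓ, is multipliable, and its product satisfies ∏_ℓ [(1 − χ(ℓ)α_ℓ² ℓ^{−s})(1 − χ(ℓ)α_ℓβ_ℓ ℓ^{−s})(1 − χ(ℓ)β_ℓ² ℓ^{−s})]^{−1} = (∑_{m≥1} χ(m)²ε(m)² m^{2k−2−2s}) · (∑_{n≥1} a(n²)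 χ(n) n^{−s}), both series on the right converging absolutely. (This is the paper's formula L^imp(Sym² f, χ, s) = L_{N_f N_χ}(χ²ε², 2s−2k+2) ∑_{n≥1} a_{n²}(f)χ(n)n^{−s}.) -/
/-
Both series on the right have Euler products; at a prime `ℓ` write `A = α_ℓ`, `B = β_ℓ` and
`X = χ(ℓ) ℓ^{-s}`. The first series has completely multiplicative coefficients, with local factor
`(1 - (A B X)²)⁻¹` because `A B = ε(ℓ) ℓ^{k-1}`. The coefficients `a(n²) χ(n) n^{-s}` of the second
series are multiplicative, and `a(ℓ^{2e}) = h_{2e}(A, B)`, a complete homogeneous symmetric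
polynomial. Sorting the monomials of `h_{2e}(A, B)` by the parity of the exponent of `A` gives
`h_{2e}(A, B) = h_e(A², B²) + A B h_{e-1}(A², B²)`, and `∑ h_e(A², B²) X^e` is a Cauchy product of
two geometric series, so the local factor is `(1 + A B X) / ((1 - A² X)(1 - B² X))`; multiplying by
`(1 - A B X)⁻¹ (1 + A B X)⁻¹` leaves the symmetric-square factor.
The second series converges absolutely because `|a(n²)| ≤ d₃(n) n^{k-1}` with `d₃ = 1 * 1 * 1`:
both sides are multiplicative, and on `n = ℓ^e` the `2e + 1` monomials of `h_{2e}(A, B)` are each at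
most `ℓ^{e(k-1)}`, while `d₃(ℓ^e) = (e + 1)(e + 2) / 2 ≥ 2e + 1`.
-/

open Finset

section CompleteHomogeneous

variable {R : Type*} [CommSemiring R]

def hsymm₂ (x y : R) (r : ℕ) : R := ∑ i ∈ range (r + 1), x ^ i * y ^ (r - i)

@[simp] lemma hsymm₂_zero (x y : R) : hsymm₂ x y 0 = 1 := by simp [hsymm₂]

lemma hsymm₂_succ (x y : R) (r : ℕ) :
    hsymm₂ x y (r + 1) = x ^ (r + 1) + y * hsymm₂ x y r := by
  rw [hsymm₂, hsymm₂, sum_range_succ, mul_sum, Nat.sub_self, pow_zero, mul_one, add_comm]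
  congr 1
  refine sum_congr rfl fun i hi ↦ ?_
  rw [Nat.sub_add_comm (Nat.le_of_lt_succ (mem_range.mp hi)), pow_succ]
  ring

lemma hsymm₂_mul_mul (x y z : R) (r : ℕ) :
    hsymm₂ (x * z) (y * z) r = hsymm₂ x y r * z ^ r := by
  rw [hsymm₂, hsymm₂, sum_mul]
  refine sum_congr rfl fun i hi ↦ ?_
  rw [mul_pow, mul_pow, ← pow_mul_pow_sub z (Nat.le_of_lt_succ (mem_range.mp hi))]
  ring

lemma hsymm₂_two_mul_add_two (x y : R) (e : ℕ) :
    hsymm₂ x y (2 * e + 2) =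
      hsymm₂ (x ^ 2) (y ^ 2) (e + 1) + x * y * hsymm₂ (x ^ 2) (y ^ 2) e := by
  induction e with
  | zero =>
    simp only [mul_zero, zero_add, hsymm₂_succ, Nat.reduceAdd, pow_one, hsymm₂_zero, mul_one]
    ring
  | succ e ih =>
    rw [show 2 * (e + 1) + 2 = 2 * e + 2 + 1 + 1 by ring, hsymm₂_succ, hsymm₂_succ, ih,
      hsymm₂_succ _ _ (e + 1), hsymm₂_succ _ _ e]
    ring

end CompleteHomogeneous

lemma norm_hsymm₂_le {E : Type*} [SeminormedCommRing E] [NormOneClass E] {x y : E} {c : ℝ}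
    (hx : ‖x‖ ≤ c) (hy : ‖y‖ ≤ c) (r : ℕ) :
    ‖hsymm₂ x y r‖ ≤ (r + 1) * c ^ r := by
  have hc : 0 ≤ c := (norm_nonneg x).trans hx
  calc ‖hsymm₂ x y r‖ ≤ ∑ i ∈ range (r + 1), ‖x ^ i * y ^ (r - i)‖ := norm_sum_le _ _
    _ ≤ ∑ i ∈ range (r + 1), c ^ r := by
      refine sum_le_sum fun i hi ↦ ?_
      rw [← pow_mul_pow_sub c (Nat.le_of_lt_succ (mem_range.mp hi))]
      refine (norm_mul_le _ _).trans (mul_le_mul ?_ ?_ (norm_nonneg _) (by positivity))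
      · exact (norm_pow_le _ _).trans (pow_le_pow_left₀ (norm_nonneg _) hx _)
      · exact (norm_pow_le _ _).trans (pow_le_pow_left₀ (norm_nonneg _) hy _)
    _ = (r + 1) * c ^ r := by simp

section NormedField

variable {𝕜 : Type*} [NormedField 𝕜]

lemma hasSum_hsymm₂ [CompleteSpace 𝕜] {u v : 𝕜} (hu : ‖u‖ < 1) (hv : ‖v‖ < 1) :
    HasSum (hsymm₂ u v) ((1 - u)⁻¹ * (1 - v)⁻¹) := by
  have := hasSum_sum_range_mul_of_summable_norm (summable_norm_geometric_of_norm_lt_one hu)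
    (summable_norm_geometric_of_norm_lt_one hv)
  rwa [tsum_geometric_of_norm_lt_one hu, tsum_geometric_of_norm_lt_one hv] at this

lemma hasSum_hsymm₂_two_mul [CompleteSpace 𝕜] {x y z : 𝕜} (hx : ‖x ^ 2 * z‖ < 1)
    (hy : ‖y ^ 2 * z‖ < 1) :
    HasSum (fun e ↦ hsymm₂ x y (2 * e) * z ^ e)
      ((1 + x * y * z) * ((1 - x ^ 2 * z)⁻¹ * (1 - y ^ 2 * z)⁻¹)) := by
  have hD : HasSum (fun e ↦ hsymm₂ (x ^ 2) (y ^ 2) e * z ^ e)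
      ((1 - x ^ 2 * z)⁻¹ * (1 - y ^ 2 * z)⁻¹) := by
    simpa only [← hsymm₂_mul_mul] using hasSum_hsymm₂ hx hy
  refine (hasSum_nat_add_iff' 1).mp ?_
  convert ((hasSum_nat_add_iff' 1).mpr hD).add (hD.mul_left (x * y * z)) using 1
  · ext e
    rw [mul_add_one 2 e, hsymm₂_two_mul_add_two]
    ring
  · simp only [range_one, sum_singleton, mul_zero, hsymm₂_zero, pow_zero, mul_one]
    ring

lemma one_sub_ne_zero_of_norm_lt_one {w : 𝕜} (hw : ‖w‖ < 1) : 1 - w ≠ 0 :=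
  sub_ne_zero.mpr fun h ↦ by simp [← h] at hw

lemma symSquare_local_factor [CompleteSpace 𝕜] {x y z : 𝕜} (hx : ‖x ^ 2 * z‖ < 1)
    (hy : ‖y ^ 2 * z‖ < 1) :
    (1 - (x * y * z) ^ 2)⁻¹ * ∑' e, hsymm₂ x y (2 * e) * z ^ e =
      ((1 - x ^ 2 * z) * (1 - x * y * z) * (1 - y ^ 2 * z))⁻¹ := by
  have hxy : ‖x * y * z‖ < 1 := by
    have : ‖x * y * z‖ ^ 2 = ‖x ^ 2 * z‖ * ‖y ^ 2 * z‖ := by simp only [norm_mul, norm_pow]; ring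
    exact (sq_lt_one_iff₀ (norm_nonneg _)).mp
      (this ▸ mul_lt_one_of_nonneg_of_lt_one_left (norm_nonneg _) hx hy.le)
  have h₁ := one_sub_ne_zero_of_norm_lt_one hx
  have h₂ := one_sub_ne_zero_of_norm_lt_one hy
  have h₃ := one_sub_ne_zero_of_norm_lt_one hxy
  have h₄ : 1 + x * y * z ≠ 0 := by
    simpa using one_sub_ne_zero_of_norm_lt_one (w := -(x * y * z)) (by rwa [norm_neg])
  rw [(hasSum_hsymm₂_two_mul hx hy).tsum_eq,
    show 1 - (x * y * z) ^ 2 = (1 - x * y * z) * (1 + x * y * z) by ring]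
  field_simp

end NormedField

section DivisorBound

open ArithmeticFunction
open scoped ArithmeticFunction.zeta ArithmeticFunction.sigma LSeries.notation

lemma norm_le_of_prime_pow_le {E : Type*} [SeminormedRing E] [NormOneClass E] {f : ℕ → E}
    {g : ArithmeticFunction ℝ} (hg : g.IsMultiplicative) (hf₁ : f 1 = 1)
    (hf : ∀ m n, 0 < m → 0 < n → m.Coprime n → f (m * n) = f m * f n)
    (hpow : ∀ p r, p.Prime → 0 < r → ‖f (p ^ r)‖ ≤ g (p ^ r)) {n : ℕ} (hn : 0 < n) :
    ‖f n‖ ≤ g n := by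
  induction n using Nat.recOnPosPrimePosCoprime with
  | prime_pow p r hp hr => exact hpow p r hp hr
  | zero => exact absurd hn (lt_irrefl 0)
  | one => rw [hf₁, hg.map_one, norm_one]
  | coprime m n hm hn hmn ihm ihn =>
    rw [hf m n (by omega) (by omega) hmn, hg.map_mul_of_coprime hmn]
    exact (norm_mul_le _ _).trans <| mul_le_mul (ihm (by omega)) (ihn (by omega))
      (norm_nonneg _) ((norm_nonneg _).trans (ihm (by omega)))

def tau₃ : ArithmeticFunction ℕ := ζ * σ 0

lemma isMultiplicative_tau₃ : tau₃.IsMultiplicative :=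
  isMultiplicative_zeta.mul isMultiplicative_sigma

lemma two_mul_add_one_le_tau₃_prime_pow {p : ℕ} (hp : p.Prime) (r : ℕ) :
    2 * r + 1 ≤ tau₃ (p ^ r) := by
  rw [tau₃, zeta_mul_apply, Nat.sum_divisors_prime_pow hp]
  simp_rw [sigma_zero_apply_prime_pow hp]
  induction r with
  | zero => simp
  | succ r ih => rw [sum_range_succ]; omega

lemma LSeriesSummable_tau₃ {s : ℂ} (hs : 1 < s.re) :
    LSeriesSummable (fun n ↦ (tau₃ n : ℂ)) s := by
  have hζ : LSeriesSummable ↗(ζ : ArithmeticFunction ℂ) s := by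
    simpa only [natCoe_apply] using LSeriesSummable_zeta_iff.mpr hs
  have := LSeriesSummable_mul hζ (LSeriesSummable_mul hζ hζ)
  rw [← natCoe_mul, ← natCoe_mul] at this
  simpa only [tau₃, ← zeta_mul_pow_eq_sigma, pow_zero_eq_zeta, natCoe_apply] using this

lemma summable_norm_mul_cpow_of_norm_le_tau₃_mul_pow {f : ℕ → ℂ} {j : ℕ} {s : ℂ}
    (hf : ∀ n, 0 < n → ‖f n‖ ≤ tau₃ n * n ^ j) (hs : j + 1 < s.re) :
    Summable fun n : ℕ ↦ ‖f n * (n : ℂ) ^ (-s)‖ := by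
  have hs₀ : s ≠ 0 := by
    rintro rfl; rw [Complex.zero_re] at hs; linarith [Nat.cast_nonneg (α := ℝ) j]
  have hτ := summable_norm_iff.mpr <|
    LSeriesSummable_tau₃ (s := s - j) (by rw [Complex.sub_re, Complex.natCast_re]; linarith)
  refine hτ.of_nonneg_of_le (fun _ ↦ norm_nonneg _) fun n ↦ ?_
  rcases Nat.eq_zero_or_pos n with rfl | hn
  · simp [hs₀]
  have hn' : (0 : ℝ) < n := by exact_mod_cast hn
  rw [LSeries.norm_term_eq, if_neg hn.ne', norm_mul, Complex.norm_natCast_cpow_of_pos hn,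
    Complex.norm_natCast, Complex.sub_re, Complex.natCast_re, Complex.neg_re, Real.rpow_sub hn',
    Real.rpow_neg hn'.le, Real.rpow_natCast, div_div_eq_mul_div, ← div_eq_mul_inv]
  gcongr
  exact hf n hn

end DivisorBound

noncomputable def dirichletPairSummandHom {N M : ℕ} (χ : DirichletCharacter ℂ N)
    (ψ : DirichletCharacter ℂ M) {w : ℂ} (hw : w ≠ 0) : ℕ →*₀ ℂ where
  toFun n := χ n * ψ n * (n : ℂ) ^ w
  map_zero' := by simp [hw]
  map_one' := by simp
  map_mul' m n := by
    simp only [Nat.cast_mul, map_mul, Complex.natCast_mul_natCast_cpow]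
    ring

lemma summable_norm_dirichletPairSummand {N M : ℕ} (χ : DirichletCharacter ℂ N)
    (ψ : DirichletCharacter ℂ M) {w : ℂ} (hw : w.re < -1) :
    Summable fun n : ℕ ↦ ‖χ n * ψ n * (n : ℂ) ^ w‖ := by
  refine (Real.summable_nat_rpow.mpr hw).of_nonneg_of_le (fun _ ↦ norm_nonneg _) fun n ↦ ?_
  rw [norm_mul, norm_mul, Complex.norm_natCast_cpow_of_re_ne_zero _ (by linarith)]
  exact mul_le_of_le_one_left (by positivity) <|
    mul_le_one₀ (χ.norm_le_one _) (norm_nonneg _) (ψ.norm_le_one _)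

lemma dirichletPair_eulerProduct_hasProd {N M : ℕ} (χ : DirichletCharacter ℂ N)
    (ψ : DirichletCharacter ℂ M) {w : ℂ} (hw : w.re < -1) :
    HasProd (fun p : Nat.Primes ↦ (1 - χ p * ψ p * (p : ℂ) ^ w)⁻¹)
      (∑' n : ℕ, χ n * ψ n * (n : ℂ) ^ w) := by
  have hw₀ : w ≠ 0 := by rintro rfl; rw [Complex.zero_re] at hw; linarith
  exact EulerProduct.eulerProduct_completely_multiplicative_hasProd
    (f := dirichletPairSummandHom χ ψ hw₀) (summable_norm_dirichletPairSummand χ ψ hw)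

lemma eulerProduct_hasProd_mul_dirichletSummand {f : ℕ → ℂ} (hf₁ : f 1 = 1)
    (hf : ∀ m n, 0 < m → 0 < n → m.Coprime n → f (m * n) = f m * f n)
    {N : ℕ} (χ : DirichletCharacter ℂ N) {s : ℂ} (hs : s ≠ 0)
    (hsum : Summable fun n : ℕ ↦ ‖f n * χ n * (n : ℂ) ^ (-s)‖) :
    HasProd (fun p : Nat.Primes ↦ ∑' e, f ((p : ℕ) ^ e) * (χ p * (p : ℂ) ^ (-s)) ^ e)
      (∑' n : ℕ, f n * χ n * (n : ℂ) ^ (-s)) := by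
  have hterm : ∀ n, f n * χ n * (n : ℂ) ^ (-s) = f n * dirichletSummandHom χ hs n := fun n ↦
    mul_assoc _ _ _
  simp only [hterm] at hsum ⊢
  have hmul : ∀ {m n : ℕ}, m.Coprime n → f (m * n) * dirichletSummandHom χ hs (m * n) =
      f m * dirichletSummandHom χ hs m * (f n * dirichletSummandHom χ hs n) := by
    intro m n hmn
    rcases Nat.eq_zero_or_pos m with rfl | hm
    · simp
    rcases Nat.eq_zero_or_pos n with rfl | hn
    · simp
    rw [hf m n hm hn hmn, map_mul]
    ring
  have h := EulerProduct.eulerProduct_hasProd (f := fun n ↦ f n * dirichletSummandHom χ hs n)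
    (by rw [map_one, hf₁, mul_one]) hmul hsum (by rw [_root_.map_zero, mul_zero])
  simp only [map_pow] at h
  exact h

lemma apply_mul_sq_of_coprime {M : Type*} [Mul M] {a : ℕ → M}
    (ha : ∀ m n : ℕ, 0 < m → 0 < n → m.Coprime n → a (m * n) = a m * a n) :
    ∀ m n : ℕ, 0 < m → 0 < n → m.Coprime n → a ((m * n) ^ 2) = a (m ^ 2) * a (n ^ 2) :=
  fun m n hm hn hmn ↦ by
    rw [mul_pow]; exact ha _ _ (by positivity) (by positivity) (hmn.pow 2 2)

lemma rpow_sub_one_div_two_sq {k : ℕ} (hk : 1 ≤ k) {x : ℝ} (hx : 0 ≤ x) :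
    (x ^ (((k : ℝ) - 1) / 2)) ^ 2 = x ^ (k - 1) := by
  rw [← Real.rpow_natCast, ← Real.rpow_mul hx, ← Real.rpow_natCast x, Nat.cast_sub hk]
  norm_num

lemma natCast_cpow_two_mul_sub {k : ℕ} (hk : 1 ≤ k) {p : ℕ} (hp : p ≠ 0) (s : ℂ) :
    (p : ℂ) ^ (2 * (k : ℂ) - 2 - 2 * s) = ((p : ℂ) ^ (k - 1) * (p : ℂ) ^ (-s)) ^ 2 := by
  rw [show 2 * (k : ℂ) - 2 - 2 * s = (2 : ℕ) * (((k - 1 : ℕ) : ℂ) + -s) by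
      push_cast [Nat.cast_sub hk]; ring,
    Complex.cpow_nat_mul, Complex.cpow_add _ _ (by exact_mod_cast hp), Complex.cpow_natCast]

section SymmetricSquare

open ArithmeticFunction

variable {k : ℕ} {α β a : ℕ → ℂ}

lemma apply_prime_pow_sq (ha₁ : a 1 = 1)
    (haP : ∀ ℓ : ℕ, ℓ.Prime → ∀ r : ℕ, 1 ≤ r → a (ℓ ^ r) = hsymm₂ (α ℓ) (β ℓ) r)
    {p : ℕ} (hp : p.Prime) (e : ℕ) : a ((p ^ e) ^ 2) = hsymm₂ (α p) (β p) (2 * e) := by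
  rcases Nat.eq_zero_or_pos e with rfl | he
  · simp [ha₁, hsymm₂]
  · rw [← pow_mul, mul_comm]
    exact haP p hp _ (by omega)

lemma norm_apply_sq_le (hk : 1 ≤ k)
    (hα : ∀ ℓ : ℕ, ℓ.Prime → ‖α ℓ‖ ≤ (ℓ : ℝ) ^ (((k : ℝ) - 1) / 2))
    (hβ : ∀ ℓ : ℕ, ℓ.Prime → ‖β ℓ‖ ≤ (ℓ : ℝ) ^ (((k : ℝ) - 1) / 2)) (ha₁ : a 1 = 1)
    (haP : ∀ ℓ : ℕ, ℓ.Prime → ∀ r : ℕ, 1 ≤ r → a (ℓ ^ r) = hsymm₂ (α ℓ) (β ℓ) r)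
    (haM : ∀ m n : ℕ, 0 < m → 0 < n → m.Coprime n → a (m * n) = a m * a n)
    {n : ℕ} (hn : 0 < n) : ‖a (n ^ 2)‖ ≤ tau₃ n * n ^ (k - 1) := by
  let g : ArithmeticFunction ℝ := tau₃.pmul (pow (k - 1))
  have hg : g.IsMultiplicative := (isMultiplicative_tau₃.pmul isMultiplicative_pow).natCast
  have hg_apply : ∀ n, 0 < n → g n = tau₃ n * n ^ (k - 1) := fun n hn ↦ by
    simp [g, pmul_apply, pow_apply, hn.ne']
  rw [← hg_apply n hn]
  refine norm_le_of_prime_pow_le hg (f := fun n ↦ a (n ^ 2)) (by simpa using ha₁)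
    (apply_mul_sq_of_coprime haM) (fun p r hp hr ↦ ?_) hn
  rw [hg_apply _ (pow_pos hp.pos r), apply_prime_pow_sq ha₁ haP hp]
  calc ‖hsymm₂ (α p) (β p) (2 * r)‖
      ≤ (2 * r + 1 : ℕ) * ((p : ℝ) ^ (((k : ℝ) - 1) / 2)) ^ (2 * r) := by
        exact_mod_cast norm_hsymm₂_le (hα p hp) (hβ p hp) (2 * r)
    _ = (2 * r + 1 : ℕ) * ((p ^ r : ℕ) : ℝ) ^ (k - 1) := by
        rw [pow_mul, rpow_sub_one_div_two_sq hk (Nat.cast_nonneg p)]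
        push_cast
        ring
    _ ≤ tau₃ (p ^ r) * ((p ^ r : ℕ) : ℝ) ^ (k - 1) := by
        gcongr
        exact_mod_cast two_mul_add_one_le_tau₃_prime_pow hp r

lemma summable_norm_symSquareSummand (hk : 1 ≤ k)
    (hα : ∀ ℓ : ℕ, ℓ.Prime → ‖α ℓ‖ ≤ (ℓ : ℝ) ^ (((k : ℝ) - 1) / 2))
    (hβ : ∀ ℓ : ℕ, ℓ.Prime → ‖β ℓ‖ ≤ (ℓ : ℝ) ^ (((k : ℝ) - 1) / 2)) (ha₁ : a 1 = 1)
    (haP : ∀ ℓ : ℕ, ℓ.Prime → ∀ r : ℕ, 1 ≤ r → a (ℓ ^ r) = hsymm₂ (α ℓ) (β ℓ) r)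
    (haM : ∀ m n : ℕ, 0 < m → 0 < n → m.Coprime n → a (m * n) = a m * a n)
    {N : ℕ} (χ : DirichletCharacter ℂ N) {s : ℂ} (hs : (k : ℝ) < s.re) :
    Summable fun n : ℕ ↦ ‖a (n ^ 2) * χ n * (n : ℂ) ^ (-s)‖ := by
  refine summable_norm_mul_cpow_of_norm_le_tau₃_mul_pow (fun n hn ↦ ?_)
    (by rwa [Nat.cast_sub hk, Nat.cast_one, sub_add_cancel])
  rw [norm_mul]
  exact (mul_le_of_le_one_right (norm_nonneg _) (χ.norm_le_one _)).trans
    (norm_apply_sq_le hk hα hβ ha₁ haP haM hn)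

lemma symSquare_euler_factor (hk : 1 ≤ k)
    (hα : ∀ ℓ : ℕ, ℓ.Prime → ‖α ℓ‖ ≤ (ℓ : ℝ) ^ (((k : ℝ) - 1) / 2))
    (hβ : ∀ ℓ : ℕ, ℓ.Prime → ‖β ℓ‖ ≤ (ℓ : ℝ) ^ (((k : ℝ) - 1) / 2)) (ha₁ : a 1 = 1)
    (haP : ∀ ℓ : ℕ, ℓ.Prime → ∀ r : ℕ, 1 ≤ r → a (ℓ ^ r) = hsymm₂ (α ℓ) (β ℓ) r)
    {Nf Nχ : ℕ} (ε : DirichletCharacter ℂ Nf) (χ : DirichletCharacter ℂ Nχ)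
    (hαβ : ∀ ℓ : ℕ, ℓ.Prime → α ℓ * β ℓ = ε (ℓ : ZMod Nf) * (ℓ : ℂ) ^ (k - 1))
    {s : ℂ} (hs : (k : ℝ) < s.re) (p : Nat.Primes) :
    (1 - χ ((p : ℕ) : ZMod Nχ) ^ 2 * ε ((p : ℕ) : ZMod Nf) ^ 2 *
        ((p : ℕ) : ℂ) ^ (2 * (k : ℂ) - 2 - 2 * s))⁻¹ *
      ∑' e, a (((p : ℕ) ^ e) ^ 2) * (χ ((p : ℕ) : ZMod Nχ) * ((p : ℕ) : ℂ) ^ (-s)) ^ e =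
    ((1 - χ ((p : ℕ) : ZMod Nχ) * α (p : ℕ) ^ 2 * ((p : ℕ) : ℂ) ^ (-s)) *
      (1 - χ ((p : ℕ) : ZMod Nχ) * (α (p : ℕ) * β (p : ℕ)) * ((p : ℕ) : ℂ) ^ (-s)) *
      (1 - χ ((p : ℕ) : ZMod Nχ) * β (p : ℕ) ^ 2 * ((p : ℕ) : ℂ) ^ (-s)))⁻¹ := by
  have hp := p.prop
  set X := χ ((p : ℕ) : ZMod Nχ) * ((p : ℕ) : ℂ) ^ (-s)
  set c := ((p : ℕ) : ℝ) ^ (((k : ℝ) - 1) / 2)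
  have hX : c ^ 2 * ‖X‖ < 1 := by
    have hp₀ : (0 : ℝ) < p := by exact_mod_cast hp.pos
    calc c ^ 2 * ‖X‖ ≤ (p : ℝ) ^ ((k : ℝ) - 1) * (p : ℝ) ^ (-s.re) := by
          rw [← Real.rpow_natCast, ← Real.rpow_mul hp₀.le, norm_mul,
            Complex.norm_natCast_cpow_of_pos hp.pos, Complex.neg_re]
          norm_num
          gcongr
          exact mul_le_of_le_one_left (Real.rpow_nonneg hp₀.le _) (χ.norm_le_one _)
      _ = (p : ℝ) ^ ((k : ℝ) - 1 - s.re) := by rw [sub_eq_add_neg _ s.re, Real.rpow_add hp₀]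
      _ < 1 := Real.rpow_lt_one_of_one_lt_of_neg (by exact_mod_cast hp.one_lt) (by linarith)
  have hnorm {x : ℂ} (hx : ‖x‖ ≤ c) : ‖x ^ 2 * X‖ < 1 :=
    lt_of_le_of_lt (by rw [norm_mul, norm_pow]; gcongr) hX
  rw [natCast_cpow_two_mul_sub hk hp.ne_zero, show _ * _ * (_ * _) ^ 2 = (α p * β p * X) ^ 2 by
      rw [hαβ p hp]; ring,
    tsum_congr fun e ↦ by rw [apply_prime_pow_sq ha₁ haP hp],
    symSquare_local_factor (hnorm (hα p hp)) (hnorm (hβ p hp))]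
  ring

end SymmetricSquare

/-- For `Re(s) > k`, the symmetric-square local Euler factors are
multipliable and
`∏_ℓ [(1−χ(ℓ)α_ℓ²ℓ^{−s})(1−χ(ℓ)α_ℓβ_ℓℓ^{−s})(1−χ(ℓ)β_ℓ²ℓ^{−s})]⁻¹
  = (∑_{m≥1} χ(m)²ε(m)² m^{2k−2−2s}) · (∑_{n≥1} a(n²)χ(n) n^{−s})`,
both series on the right converging absolutely. -/
theorem symm_square_imprimitive_euler_product
    (k : ℕ) (hk : 1 ≤ k)
    (α β : ℕ → ℂ)
    (hα : ∀ ℓ : ℕ, ℓ.Prime → ‖α ℓ‖ ≤ (ℓ : ℝ) ^ (((k : ℝ) - 1) / 2))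
    (hβ : ∀ ℓ : ℕ, ℓ.Prime → ‖β ℓ‖ ≤ (ℓ : ℝ) ^ (((k : ℝ) - 1) / 2))
    (a : ℕ → ℂ) (ha1 : a 1 = 1)
    (haP : ∀ ℓ : ℕ, ℓ.Prime → ∀ r : ℕ, 1 ≤ r →
      a (ℓ ^ r) = ∑ i ∈ Finset.range (r + 1), α ℓ ^ i * β ℓ ^ (r - i))
    (haM : ∀ m n : ℕ, 0 < m → 0 < n → Nat.Coprime m n → a (m * n) = a m * a n)
    (Nf Nχ : ℕ) (ε : DirichletCharacter ℂ Nf) (χ : DirichletCharacter ℂ Nχ)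
    (hαβ : ∀ ℓ : ℕ, ℓ.Prime → α ℓ * β ℓ = ε (ℓ : ZMod Nf) * (ℓ : ℂ) ^ (k - 1))
    (s : ℂ) (hs : (k : ℝ) < s.re) :
    Multipliable (fun ℓ : Nat.Primes =>
      ((1 - χ ((ℓ : ℕ) : ZMod Nχ) * α (ℓ : ℕ) ^ 2 * ((ℓ : ℕ) : ℂ) ^ (-s)) *
        (1 - χ ((ℓ : ℕ) : ZMod Nχ) * (α (ℓ : ℕ) * β (ℓ : ℕ)) * ((ℓ : ℕ) : ℂ) ^ (-s)) *
        (1 - χ ((ℓ : ℕ) : ZMod Nχ) * β (ℓ : ℕ) ^ 2 * ((ℓ : ℕ) : ℂ) ^ (-s)))⁻¹) ∧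
    Summable (fun m : ℕ+ =>
      ‖χ ((m : ℕ) : ZMod Nχ) ^ 2 * ε ((m : ℕ) : ZMod Nf) ^ 2 *
        ((m : ℕ) : ℂ) ^ (2 * (k : ℂ) - 2 - 2 * s)‖) ∧
    Summable (fun n : ℕ+ =>
      ‖a ((n : ℕ) ^ 2) * χ ((n : ℕ) : ZMod Nχ) * ((n : ℕ) : ℂ) ^ (-s)‖) ∧
    (∏' ℓ : Nat.Primes,
      ((1 - χ ((ℓ : ℕ) : ZMod Nχ) * α (ℓ : ℕ) ^ 2 * ((ℓ : ℕ) : ℂ) ^ (-s)) *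
        (1 - χ ((ℓ : ℕ) : ZMod Nχ) * (α (ℓ : ℕ) * β (ℓ : ℕ)) * ((ℓ : ℕ) : ℂ) ^ (-s)) *
        (1 - χ ((ℓ : ℕ) : ZMod Nχ) * β (ℓ : ℕ) ^ 2 * ((ℓ : ℕ) : ℂ) ^ (-s)))⁻¹) =
    (∑' m : ℕ+, χ ((m : ℕ) : ZMod Nχ) ^ 2 * ε ((m : ℕ) : ZMod Nf) ^ 2 *
        ((m : ℕ) : ℂ) ^ (2 * (k : ℂ) - 2 - 2 * s)) *
      (∑' n : ℕ+, a ((n : ℕ) ^ 2) * χ ((n : ℕ) : ZMod Nχ) * ((n : ℕ) : ℂ) ^ (-s)) := by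
  have hs₀ : s ≠ 0 := by
    rintro rfl; rw [Complex.zero_re] at hs; linarith [Nat.cast_nonneg (α := ℝ) k]
  have hw : (2 * (k : ℂ) - 2 - 2 * s).re < -1 := by
    simpa using (by linarith : 2 * (k : ℝ) - 2 - 2 * s.re < -1)
  have hw₀ : 2 * (k : ℂ) - 2 - 2 * s ≠ 0 := by rintro h; rw [h, Complex.zero_re] at hw; linarith
  have hF := summable_norm_symSquareSummand hk hα hβ ha1 haP haM χ hs
  have hFprod := eulerProduct_hasProd_mul_dirichletSummand (f := fun n ↦ a (n ^ 2))
    (by simpa using ha1) (apply_mul_sq_of_coprime haM) χ hs₀ hF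
  have hG := summable_norm_dirichletPairSummand (χ ^ 2) (ε ^ 2) hw
  have hGprod := dirichletPair_eulerProduct_hasProd (χ ^ 2) (ε ^ 2) hw
  simp only [MulChar.pow_apply' _ two_ne_zero] at hG hGprod
  have hprod := hGprod.mul hFprod
  simp only [symSquare_euler_factor hk hα hβ ha1 haP ε χ hαβ hs] at hprod
  refine ⟨hprod.multipliable, hG.comp_injective PNat.coe_injective,
    hF.comp_injective PNat.coe_injective, ?_⟩
  rw [hprod.tprod_eq]
  congr 1 <;> refine (tsum_pnat_eq_tsum_of_eq_zero ?_).symm <;> simp [hw₀, hs₀]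
end

section
/- For every s ∈ ℂ with Re(s) > k, the family of local factors ℓ ↦ (1 − χ(ℓ)²α_ℓ²β_ℓ² ℓ^{−2s}) · [(1 − χ(ℓ)α_ℓ² ℓ^{−s})(1 − χ(ℓ)α_ℓβ_ℓ ℓ^{−s})²(1 − χ(ℓ)β_ℓ² ℓ^{−s})]^{−1}, indexed by primes ℓ, is multipliable, and ∑_{n≥1} a(n)² χ(n) n^{−s} = ∏_ℓ (1 − χ(ℓ)²α_ℓ²β_ℓ² ℓ^{−2s}) · [(1 − χ(ℓ)α_ℓ² ℓ^{−s})(1 − χ(ℓ)α_ℓβ_ℓ ℓ^{−s})²(1 − χ(ℓ)β_ℓ² ℓ^{−s})]^{−1}, the series on the left converging absolutely. (This is the Euler product expressing the imprimitive Rankin–Selberg convolution L^imp(f, f, χ, s).) -/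
/-!
Since `a (ℓ ^ r) = h_r(α_ℓ, β_ℓ)` obeys the Hecke recursion
`h_{r+2} = (α + β) h_{r+1} - α β h_r`, the squares `h_r²` obey a recursion of order three with
characteristic roots `α²`, `αβ`, `β²`. Hence the local series `∑_r h_r² x^r` equals
`(1 + αβx) / ((1 - α²x)(1 - αβx)(1 - β²x)) = (1 - α²β²x²) / ((1 - α²x)(1 - αβx)²(1 - β²x))`.
For absolute convergence, the bounds on `α_ℓ, β_ℓ` give `|a(ℓ^r)² χ(ℓ^r) ℓ^{-rs}| ≤ (r + 1)² ℓ^{-rt}`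
with `t = Re s - k + 1 > 1`, so each local sum of absolute values is at most `1 + C ℓ^{-t}`, and
the partial sums of the multiplicative series are bounded by `∏_ℓ (1 + C ℓ^{-t}) ≤ exp (C ζ(t))`.
-/

open Finset

def completeHomogeneous₂ {R : Type*} [CommSemiring R] (A B : R) (r : ℕ) : R :=
  ∑ i ∈ range (r + 1), A ^ i * B ^ (r - i)

section Recurrence

variable {R : Type*} [CommRing R] (A B : R)

lemma completeHomogeneous₂_succ (r : ℕ) :
    completeHomogeneous₂ A B (r + 1) = B * completeHomogeneous₂ A B r + A ^ (r + 1) := by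
  rw [completeHomogeneous₂, sum_range_succ, Nat.sub_self, pow_zero, mul_one,
    completeHomogeneous₂, mul_sum]
  congr 1
  refine sum_congr rfl fun i hi => ?_
  rw [Nat.sub_add_comm (mem_range_succ_iff.mp hi), pow_succ]
  ring

lemma completeHomogeneous₂_add_two (r : ℕ) :
    completeHomogeneous₂ A B (r + 2) =
      (A + B) * completeHomogeneous₂ A B (r + 1) - A * B * completeHomogeneous₂ A B r := by
  rw [completeHomogeneous₂_succ A B (r + 1), completeHomogeneous₂_succ A B r]
  ring

lemma completeHomogeneous₂_sq_add_three (r : ℕ) :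
    completeHomogeneous₂ A B (r + 3) ^ 2 =
      (A ^ 2 + A * B + B ^ 2) * completeHomogeneous₂ A B (r + 2) ^ 2
        - A * B * (A ^ 2 + A * B + B ^ 2) * completeHomogeneous₂ A B (r + 1) ^ 2
        + (A * B) ^ 3 * completeHomogeneous₂ A B r ^ 2 := by
  rw [completeHomogeneous₂_add_two A B (r + 1), completeHomogeneous₂_add_two A B r]
  ring

end Recurrence

lemma norm_completeHomogeneous₂_le {𝕜 : Type*} [NormedField 𝕜] {A B : 𝕜} {M : ℝ}
    (hA : ‖A‖ ≤ M) (hB : ‖B‖ ≤ M) (r : ℕ) :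
    ‖completeHomogeneous₂ A B r‖ ≤ (r + 1) * M ^ r := by
  calc ‖completeHomogeneous₂ A B r‖ ≤ ∑ _i ∈ range (r + 1), M ^ r := by
        refine (norm_sum_le _ _).trans (sum_le_sum fun i hi => ?_)
        rw [norm_mul, norm_pow, norm_pow, ← pow_mul_pow_sub M (mem_range_succ_iff.mp hi)]
        have hM : 0 ≤ M := (norm_nonneg A).trans hA
        gcongr
    _ = (r + 1) * M ^ r := by simp

theorem HasSum.mul_eq_of_recurrence_three {R : Type*} [CommRing R] [TopologicalSpace R]
    [IsTopologicalRing R] [T2Space R] {v : ℕ → R} {c₁ c₂ c₃ x S : R}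
    (hv : ∀ m, v (m + 3) = c₁ * v (m + 2) - c₂ * v (m + 1) + c₃ * v m)
    (hS : HasSum (fun e => v e * x ^ e) S) :
    S * (1 - c₁ * x + c₂ * x ^ 2 - c₃ * x ^ 3) =
      v 0 + (v 1 - c₁ * v 0) * x + (v 2 - c₁ * v 1 + c₂ * v 0) * x ^ 2 := by
  have h₃ := (hasSum_nat_add_iff' 3).mpr hS
  have h₂ := ((hasSum_nat_add_iff' 2).mpr hS).mul_left (c₁ * x)
  have h₁ := ((hasSum_nat_add_iff' 1).mpr hS).mul_left (c₂ * x ^ 2)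
  have h₀ := hS.mul_left (c₃ * x ^ 3)
  have hshift := (h₂.sub h₁).add h₀
  have hterm : ∀ e, c₁ * x * (v (e + 2) * x ^ (e + 2)) - c₂ * x ^ 2 * (v (e + 1) * x ^ (e + 1))
      + c₃ * x ^ 3 * (v e * x ^ e) = v (e + 3) * x ^ (e + 3) := fun e => by rw [hv]; ring
  simp only [hterm] at hshift
  have := h₃.unique hshift
  simp only [sum_range_succ, sum_range_zero] at this
  linear_combination this

lemma summable_add_sq_mul_geometric {R : Type*} [NormedCommRing R] [CompleteSpace R]
    (c : R) {r : R} (hr : ‖r‖ < 1) : Summable (fun n : ℕ => ((n : R) + c) ^ 2 * r ^ n) := by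
  convert ((summable_pow_mul_geometric_of_norm_lt_one 2 hr).add
    ((summable_pow_mul_geometric_of_norm_lt_one 1 hr).mul_left (2 * c))).add
    ((summable_geometric_of_norm_lt_one hr).mul_left (c ^ 2)) using 2 with n
  ring

lemma tsum_add_one_sq_mul_pow_le {Q q : ℝ} (hQ : 0 ≤ Q) (hQq : Q ≤ q) (hq : q < 1) :
    ∑' e : ℕ, ((e : ℝ) + 1) ^ 2 * Q ^ e ≤ 1 + (∑' e : ℕ, ((e : ℝ) + 2) ^ 2 * q ^ e) * Q := by
  have hsumQ := summable_add_sq_mul_geometric 1 (r := Q) (by rw [Real.norm_of_nonneg hQ]; linarith)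
  have hsumq := summable_add_sq_mul_geometric 2 (r := q)
    (by rw [Real.norm_of_nonneg (hQ.trans hQq)]; exact hq)
  rw [hsumQ.tsum_eq_zero_add, ← tsum_mul_right]
  refine add_le_add (by simp) (((summable_nat_add_iff 1).mpr hsumQ).tsum_le_tsum (fun e => ?_)
    (hsumq.mul_right Q))
  calc (((e + 1 : ℕ) : ℝ) + 1) ^ 2 * Q ^ (e + 1) = ((e : ℝ) + 2) ^ 2 * Q ^ e * Q := by
        push_cast; ring
    _ ≤ ((e : ℝ) + 2) ^ 2 * q ^ e * Q := by gcongr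

lemma norm_completeHomogeneous₂_sq_mul_pow_le {𝕜 : Type*} [NormedField 𝕜] {A B x : 𝕜} {M : ℝ}
    (hA : ‖A‖ ≤ M) (hB : ‖B‖ ≤ M) (e : ℕ) :
    ‖completeHomogeneous₂ A B e ^ 2 * x ^ e‖ ≤ ((e : ℝ) + 1) ^ 2 * (M ^ 2 * ‖x‖) ^ e := by
  have hM : 0 ≤ M := (norm_nonneg A).trans hA
  calc ‖completeHomogeneous₂ A B e ^ 2 * x ^ e‖
      ≤ ((e + 1) * M ^ e) ^ 2 * ‖x‖ ^ e := by
        rw [norm_mul, norm_pow, norm_pow]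
        gcongr
        exact norm_completeHomogeneous₂_le hA hB e
    _ = ((e : ℝ) + 1) ^ 2 * (M ^ 2 * ‖x‖) ^ e := by ring

theorem hasSum_completeHomogeneous₂_sq_mul_pow {𝕜 : Type*} [NormedField 𝕜] [CompleteSpace 𝕜]
    {A B x : 𝕜} {M : ℝ} (hA : ‖A‖ ≤ M) (hB : ‖B‖ ≤ M) (hx : M ^ 2 * ‖x‖ < 1) :
    HasSum (fun e => completeHomogeneous₂ A B e ^ 2 * x ^ e)
      ((1 - (A * B * x) ^ 2) * ((1 - A ^ 2 * x) * (1 - A * B * x) ^ 2 * (1 - B ^ 2 * x))⁻¹) := by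
  have hM : 0 ≤ M := (norm_nonneg A).trans hA
  have hsum : Summable (fun e => ‖completeHomogeneous₂ A B e ^ 2 * x ^ e‖) :=
    .of_nonneg_of_le (fun _ => norm_nonneg _) (norm_completeHomogeneous₂_sq_mul_pow_le hA hB)
      (summable_add_sq_mul_geometric 1 (by rwa [Real.norm_of_nonneg (by positivity)]))
  obtain ⟨S, hS⟩ := hsum.of_norm
  -- the initial values `1, A + B, A² + AB + B²` reduce the right-hand side to `1 + ABx`
  have hS_mul := hS.mul_eq_of_recurrence_three (completeHomogeneous₂_sq_add_three A B)
  simp only [completeHomogeneous₂, sum_range_succ, sum_range_zero, Nat.sub_zero, Nat.sub_self,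
    pow_zero, pow_one] at hS_mul
  have hne : ∀ z : 𝕜, ‖z‖ ≤ M ^ 2 → 1 - z * x ≠ 0 := fun z hz h => by
    have : ‖z * x‖ < 1 := by
      rw [norm_mul]; exact (mul_le_mul_of_nonneg_right hz (norm_nonneg x)).trans_lt hx
    rw [← sub_eq_zero.mp h, norm_one] at this
    exact lt_irrefl _ this
  have hAB := hne (A * B) (by rw [norm_mul, sq]; gcongr)
  have hA2 := hne (A ^ 2) (by rw [norm_pow]; gcongr)
  have hB2 := hne (B ^ 2) (by rw [norm_pow]; gcongr)
  have hS_eq : S = (1 - (A * B * x) ^ 2) *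
      ((1 - A ^ 2 * x) * (1 - A * B * x) ^ 2 * (1 - B ^ 2 * x))⁻¹ := by
    rw [eq_mul_inv_iff_mul_eq₀ (by simp [hA2, hAB, hB2])]
    linear_combination (1 - A * B * x) * hS_mul
  exact hS_eq ▸ hS

theorem summable_of_tsum_prime_pow_le_one_add {φ : ℕ → ℝ} (hφ : 0 ≤ φ) (hφ₀ : φ 0 = 0)
    (hφ₁ : φ 1 = 1) (hmul : ∀ {m n : ℕ}, m.Coprime n → φ (m * n) = φ m * φ n)
    {g : ℕ → ℝ} (hg : 0 ≤ g) (hg_sum : Summable g)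
    (hsum : ∀ {p : ℕ}, p.Prime → Summable (fun e => φ (p ^ e)))
    (hle : ∀ {p : ℕ}, p.Prime → ∑' e, φ (p ^ e) ≤ 1 + g p) :
    Summable φ := by
  refine summable_of_sum_range_le hφ (c := Real.exp (∑' n, g n)) fun N => ?_
  have hN := (EulerProduct.summable_and_hasSum_smoothNumbers_prod_primesBelow_tsum hφ₁ hmul
    (fun hp => by simpa only [Real.norm_of_nonneg (hφ _)] using hsum hp) N).2
  rw [← Function.comp_def, hasSum_subtype_iff_indicator] at hN
  have hφ_eq : ∀ i ∈ range N, φ i = (N.smoothNumbers).indicator φ i := fun i hi => by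
    rcases Nat.eq_zero_or_pos i with rfl | hi₀
    · simp [hφ₀, Set.indicator_apply]
    · exact (Set.indicator_of_mem (Nat.mem_smoothNumbers_of_lt hi₀ (mem_range.mp hi)) φ).symm
  calc ∑ i ∈ range N, φ i = ∑ i ∈ range N, (N.smoothNumbers).indicator φ i := sum_congr rfl hφ_eq
    _ ≤ ∏ p ∈ N.primesBelow, ∑' e, φ (p ^ e) :=
        sum_le_hasSum _ (fun i _ => Set.indicator_nonneg (fun j _ => hφ j) i) hN
    _ ≤ ∏ p ∈ N.primesBelow, (1 + g p) :=
        prod_le_prod (fun p _ => tsum_nonneg fun e => hφ _)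
          fun p hp => hle (Nat.prime_of_mem_primesBelow hp)
    _ ≤ Real.exp (∑ p ∈ N.primesBelow, g p) := Real.prod_one_add_le_exp_sum _ hg
    _ ≤ Real.exp (∑' n, g n) := Real.exp_le_exp.mpr (hg_sum.sum_le_tsum _ fun n _ => hg n)

theorem summable_of_le_add_one_sq_mul_pow {φ : ℕ → ℝ} (hφ : 0 ≤ φ) (hφ₀ : φ 0 = 0)
    (hφ₁ : φ 1 = 1) (hmul : ∀ {m n : ℕ}, m.Coprime n → φ (m * n) = φ m * φ n)
    {G : ℕ → ℝ} {q : ℝ} (hG : 0 ≤ G) (hG_sum : Summable G) (hGq : ∀ p : ℕ, p.Prime → G p ≤ q)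
    (hq : q < 1) (hle : ∀ p : ℕ, p.Prime → ∀ e : ℕ, φ (p ^ e) ≤ ((e : ℝ) + 1) ^ 2 * G p ^ e) :
    Summable φ := by
  set C := ∑' e : ℕ, ((e : ℝ) + 2) ^ 2 * q ^ e
  have hq₀ : 0 ≤ q := (hG 2).trans (hGq 2 Nat.prime_two)
  have hC : 0 ≤ C := tsum_nonneg fun e => by positivity
  have hsum_pow : ∀ {p : ℕ}, p.Prime → Summable (fun e : ℕ => ((e : ℝ) + 1) ^ 2 * G p ^ e) :=
    fun hp => summable_add_sq_mul_geometric 1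
      (by rw [Real.norm_of_nonneg (hG _)]; exact (hGq _ hp).trans_lt hq)
  refine summable_of_tsum_prime_pow_le_one_add hφ hφ₀ hφ₁ hmul (g := fun n => C * G n)
    (fun n => mul_nonneg hC (hG n)) (hG_sum.mul_left C)
    (fun hp => (hsum_pow hp).of_nonneg_of_le (fun e => hφ _) (hle _ hp)) fun {p} hp => ?_
  calc ∑' e, φ (p ^ e) ≤ ∑' e : ℕ, ((e : ℝ) + 1) ^ 2 * G p ^ e :=
        ((hsum_pow hp).of_nonneg_of_le (fun e => hφ _) (hle _ hp)).tsum_le_tsum (hle _ hp)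
          (hsum_pow hp)
    _ ≤ 1 + C * G p := tsum_add_one_sq_mul_pow_le (hG p) (hGq p hp) hq

lemma rpow_sq_mul_norm_mul_cpow_le {p : ℕ} (hp : 0 < p) {c : ℂ} (hc : ‖c‖ ≤ 1) (σ : ℝ) (s : ℂ) :
    ((p : ℝ) ^ (σ / 2)) ^ 2 * ‖c * (p : ℂ) ^ (-s)‖ ≤ (p : ℝ) ^ (-(s.re - σ)) := by
  have hp' : (0 : ℝ) < p := by exact_mod_cast hp
  rw [norm_mul, Complex.norm_natCast_cpow_of_pos hp, Complex.neg_re, ← Real.rpow_natCast,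
    ← Real.rpow_mul hp'.le, show -(s.re - σ) = σ / 2 * (2 : ℕ) + -s.re by push_cast; ring,
    Real.rpow_add hp']
  exact mul_le_mul_of_nonneg_left (mul_le_of_le_one_left (by positivity) hc) (by positivity)

section RankinSelberg

variable {N : ℕ} (χ : DirichletCharacter ℂ N) (a : ℕ → ℂ) (s : ℂ)

noncomputable def rankinSelbergTerm (n : ℕ) : ℂ := a n ^ 2 * χ n * (n : ℂ) ^ (-s)

variable {χ a s}

lemma rankinSelbergTerm_zero (hs : s ≠ 0) : rankinSelbergTerm χ a s 0 = 0 := by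
  simp [rankinSelbergTerm, Complex.zero_cpow (neg_ne_zero.mpr hs)]

lemma rankinSelbergTerm_one (ha₁ : a 1 = 1) : rankinSelbergTerm χ a s 1 = 1 := by
  simp [rankinSelbergTerm, ha₁]

lemma rankinSelbergTerm_mul (hs : s ≠ 0)
    (haM : ∀ m n : ℕ, 0 < m → 0 < n → m.Coprime n → a (m * n) = a m * a n)
    {m n : ℕ} (hmn : m.Coprime n) :
    rankinSelbergTerm χ a s (m * n) = rankinSelbergTerm χ a s m * rankinSelbergTerm χ a s n := by
  rcases Nat.eq_zero_or_pos m with rfl | hm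
  · simp [rankinSelbergTerm_zero hs]
  rcases Nat.eq_zero_or_pos n with rfl | hn
  · simp [rankinSelbergTerm_zero hs]
  simp only [rankinSelbergTerm, haM m n hm hn hmn, Nat.cast_mul, map_mul,
    Complex.natCast_mul_natCast_cpow]
  ring

lemma rankinSelbergTerm_prime_pow {α β : ℕ → ℂ} (ha₁ : a 1 = 1)
    (haP : ∀ ℓ : ℕ, ℓ.Prime → ∀ r : ℕ, 1 ≤ r →
      a (ℓ ^ r) = ∑ i ∈ Finset.range (r + 1), α ℓ ^ i * β ℓ ^ (r - i))
    {p : ℕ} (hp : p.Prime) (e : ℕ) :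
    rankinSelbergTerm χ a s (p ^ e) =
      completeHomogeneous₂ (α p) (β p) e ^ 2 * (χ p * (p : ℂ) ^ (-s)) ^ e := by
  have ha : a (p ^ e) = completeHomogeneous₂ (α p) (β p) e := by
    rcases e with _ | e
    · simp [ha₁, completeHomogeneous₂]
    · exact haP p hp (e + 1) (Nat.le_add_left 1 e)
  rw [rankinSelbergTerm, ha, Nat.cast_pow, Nat.cast_pow, map_pow,
    ← Complex.natCast_cpow_natCast_mul, Complex.cpow_nat_mul, mul_pow]
  ring

theorem hasSum_rankinSelbergTerm_prime_pow {α β : ℕ → ℂ} (ha₁ : a 1 = 1)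
    (haP : ∀ ℓ : ℕ, ℓ.Prime → ∀ r : ℕ, 1 ≤ r →
      a (ℓ ^ r) = ∑ i ∈ Finset.range (r + 1), α ℓ ^ i * β ℓ ^ (r - i))
    {p : ℕ} (hp : p.Prime) {M : ℝ} (hα : ‖α p‖ ≤ M) (hβ : ‖β p‖ ≤ M)
    (hM : M ^ 2 * ‖χ p * (p : ℂ) ^ (-s)‖ < 1) :
    HasSum (fun e => rankinSelbergTerm χ a s (p ^ e))
      ((1 - χ p ^ 2 * (α p ^ 2 * β p ^ 2) * (p : ℂ) ^ (-(2 * s))) *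
        ((1 - χ p * α p ^ 2 * (p : ℂ) ^ (-s)) * (1 - χ p * (α p * β p) * (p : ℂ) ^ (-s)) ^ 2 *
          (1 - χ p * β p ^ 2 * (p : ℂ) ^ (-s)))⁻¹) := by
  have h2s : (p : ℂ) ^ (-(2 * s)) = ((p : ℂ) ^ (-s)) ^ 2 := by
    rw [show -(2 * s) = (2 : ℕ) * -s by push_cast; ring, Complex.cpow_nat_mul]
  have h := hasSum_completeHomogeneous₂_sq_mul_pow hα hβ hM
  simp only [← rankinSelbergTerm_prime_pow ha₁ haP hp] at h
  refine (congrArg (HasSum fun e => rankinSelbergTerm χ a s (p ^ e)) ?_).mp h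
  rw [h2s]
  ring

end RankinSelberg

theorem rankin_selberg_imprimitive_euler_product_general
    (k : ℕ)
    (α β : ℕ → ℂ)
    (hα : ∀ ℓ : ℕ, ℓ.Prime → ‖α ℓ‖ ≤ (ℓ : ℝ) ^ (((k : ℝ) - 1) / 2))
    (hβ : ∀ ℓ : ℕ, ℓ.Prime → ‖β ℓ‖ ≤ (ℓ : ℝ) ^ (((k : ℝ) - 1) / 2))
    (a : ℕ → ℂ) (ha1 : a 1 = 1)
    (haP : ∀ ℓ : ℕ, ℓ.Prime → ∀ r : ℕ, 1 ≤ r →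
      a (ℓ ^ r) = ∑ i ∈ Finset.range (r + 1), α ℓ ^ i * β ℓ ^ (r - i))
    (haM : ∀ m n : ℕ, 0 < m → 0 < n → Nat.Coprime m n → a (m * n) = a m * a n)
    (Nχ : ℕ) (χ : DirichletCharacter ℂ Nχ)
    (s : ℂ) (hs : (k : ℝ) < s.re) :
    Multipliable (fun ℓ : Nat.Primes =>
      (1 - χ ((ℓ : ℕ) : ZMod Nχ) ^ 2 * (α (ℓ : ℕ) ^ 2 * β (ℓ : ℕ) ^ 2) *
          ((ℓ : ℕ) : ℂ) ^ (-(2 * s))) *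
        ((1 - χ ((ℓ : ℕ) : ZMod Nχ) * α (ℓ : ℕ) ^ 2 * ((ℓ : ℕ) : ℂ) ^ (-s)) *
          (1 - χ ((ℓ : ℕ) : ZMod Nχ) * (α (ℓ : ℕ) * β (ℓ : ℕ)) * ((ℓ : ℕ) : ℂ) ^ (-s)) ^ 2 *
          (1 - χ ((ℓ : ℕ) : ZMod Nχ) * β (ℓ : ℕ) ^ 2 * ((ℓ : ℕ) : ℂ) ^ (-s)))⁻¹) ∧
    Summable (fun n : ℕ+ =>
      ‖a (n : ℕ) ^ 2 * χ ((n : ℕ) : ZMod Nχ) * ((n : ℕ) : ℂ) ^ (-s)‖) ∧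
    (∑' n : ℕ+, a (n : ℕ) ^ 2 * χ ((n : ℕ) : ZMod Nχ) * ((n : ℕ) : ℂ) ^ (-s)) =
    ∏' ℓ : Nat.Primes,
      (1 - χ ((ℓ : ℕ) : ZMod Nχ) ^ 2 * (α (ℓ : ℕ) ^ 2 * β (ℓ : ℕ) ^ 2) *
          ((ℓ : ℕ) : ℂ) ^ (-(2 * s))) *
        ((1 - χ ((ℓ : ℕ) : ZMod Nχ) * α (ℓ : ℕ) ^ 2 * ((ℓ : ℕ) : ℂ) ^ (-s)) *
          (1 - χ ((ℓ : ℕ) : ZMod Nχ) * (α (ℓ : ℕ) * β (ℓ : ℕ)) * ((ℓ : ℕ) : ℂ) ^ (-s)) ^ 2 *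
          (1 - χ ((ℓ : ℕ) : ZMod Nχ) * β (ℓ : ℕ) ^ 2 * ((ℓ : ℕ) : ℂ) ^ (-s)))⁻¹ := by
  have hs₀ : s ≠ 0 := by
    rintro rfl
    exact (Nat.cast_nonneg k).not_gt (by simpa using hs)
  set t := s.re - ((k : ℝ) - 1)
  have hq : (2 : ℝ) ^ (-t) < 1 := Real.rpow_lt_one_of_one_lt_of_neg one_lt_two (by linarith)
  have hpt : ∀ p : ℕ, p.Prime → (p : ℝ) ^ (-t) ≤ 2 ^ (-t) := fun p hp =>
    Real.rpow_le_rpow_of_nonpos two_pos (by exact_mod_cast hp.two_le) (by linarith)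
  have hratio : ∀ p : ℕ, p.Prime →
      ((p : ℝ) ^ (((k : ℝ) - 1) / 2)) ^ 2 * ‖χ p * (p : ℂ) ^ (-s)‖ ≤ (p : ℝ) ^ (-t) :=
    fun p hp => rpow_sq_mul_norm_mul_cpow_le hp.pos (χ.norm_le_one _) _ s
  have hsum : Summable (‖rankinSelbergTerm χ a s ·‖) := by
    refine summable_of_le_add_one_sq_mul_pow (fun _ => norm_nonneg _)
      (by simp [rankinSelbergTerm_zero hs₀]) (by simp [rankinSelbergTerm_one ha1])
      (fun hmn => by simp only [rankinSelbergTerm_mul hs₀ haM hmn, norm_mul])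
      (fun n => by positivity) (Real.summable_nat_rpow.mpr (by linarith)) hpt hq fun p hp e => ?_
    rw [rankinSelbergTerm_prime_pow ha1 haP hp]
    exact (norm_completeHomogeneous₂_sq_mul_pow_le (hα p hp) (hβ p hp) e).trans
      (by gcongr; exact hratio p hp)
  have hprod := EulerProduct.eulerProduct_hasProd (rankinSelbergTerm_one ha1)
    (rankinSelbergTerm_mul hs₀ haM) hsum (rankinSelbergTerm_zero hs₀)
  have hlocal (p : Nat.Primes) := (hasSum_rankinSelbergTerm_prime_pow ha1 haP p.prop
    (hα p p.prop) (hβ p p.prop) ((hratio p p.prop).trans_lt ((hpt p p.prop).trans_lt hq))).tsum_eq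
  refine ⟨hprod.multipliable.congr hlocal, summable_pnat_iff_summable_nat.mpr hsum, ?_⟩
  rw [← tprod_congr hlocal, hprod.tprod_eq]
  exact tsum_pnat_eq_tsum_of_eq_zero (rankinSelbergTerm_zero hs₀)

/-- For `Re(s) > k`, the Rankin–Selberg local factors
`(1 − χ(ℓ)²α_ℓ²β_ℓ²ℓ^{−2s}) · [(1−χ(ℓ)α_ℓ²ℓ^{−s})(1−χ(ℓ)α_ℓβ_ℓℓ^{−s})²(1−χ(ℓ)β_ℓ²ℓ^{−s})]⁻¹`
are multipliable, and their product equals `∑_{n≥1} a(n)²χ(n) n^{−s}`, the series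
converging absolutely. -/
theorem rankin_selberg_imprimitive_euler_product
    (k : ℕ) (hk : 1 ≤ k)
    (α β : ℕ → ℂ)
    (hα : ∀ ℓ : ℕ, ℓ.Prime → ‖α ℓ‖ ≤ (ℓ : ℝ) ^ (((k : ℝ) - 1) / 2))
    (hβ : ∀ ℓ : ℕ, ℓ.Prime → ‖β ℓ‖ ≤ (ℓ : ℝ) ^ (((k : ℝ) - 1) / 2))
    (a : ℕ → ℂ) (ha1 : a 1 = 1)
    (haP : ∀ ℓ : ℕ, ℓ.Prime → ∀ r : ℕ, 1 ≤ r →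
      a (ℓ ^ r) = ∑ i ∈ Finset.range (r + 1), α ℓ ^ i * β ℓ ^ (r - i))
    (haM : ∀ m n : ℕ, 0 < m → 0 < n → Nat.Coprime m n → a (m * n) = a m * a n)
    (Nf Nχ : ℕ) (ε : DirichletCharacter ℂ Nf) (χ : DirichletCharacter ℂ Nχ)
    (hαβ : ∀ ℓ : ℕ, ℓ.Prime → α ℓ * β ℓ = ε (ℓ : ZMod Nf) * (ℓ : ℂ) ^ (k - 1))
    (s : ℂ) (hs : (k : ℝ) < s.re) :
    Multipliable (fun ℓ : Nat.Primes =>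
      (1 - χ ((ℓ : ℕ) : ZMod Nχ) ^ 2 * (α (ℓ : ℕ) ^ 2 * β (ℓ : ℕ) ^ 2) *
          ((ℓ : ℕ) : ℂ) ^ (-(2 * s))) *
        ((1 - χ ((ℓ : ℕ) : ZMod Nχ) * α (ℓ : ℕ) ^ 2 * ((ℓ : ℕ) : ℂ) ^ (-s)) *
          (1 - χ ((ℓ : ℕ) : ZMod Nχ) * (α (ℓ : ℕ) * β (ℓ : ℕ)) * ((ℓ : ℕ) : ℂ) ^ (-s)) ^ 2 *
          (1 - χ ((ℓ : ℕ) : ZMod Nχ) * β (ℓ : ℕ) ^ 2 * ((ℓ : ℕ) : ℂ) ^ (-s)))⁻¹) ∧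
    Summable (fun n : ℕ+ =>
      ‖a (n : ℕ) ^ 2 * χ ((n : ℕ) : ZMod Nχ) * ((n : ℕ) : ℂ) ^ (-s)‖) ∧
    (∑' n : ℕ+, a (n : ℕ) ^ 2 * χ ((n : ℕ) : ZMod Nχ) * ((n : ℕ) : ℂ) ^ (-s)) =
    ∏' ℓ : Nat.Primes,
      (1 - χ ((ℓ : ℕ) : ZMod Nχ) ^ 2 * (α (ℓ : ℕ) ^ 2 * β (ℓ : ℕ) ^ 2) *
          ((ℓ : ℕ) : ℂ) ^ (-(2 * s))) *
        ((1 - χ ((ℓ : ℕ) : ZMod Nχ) * α (ℓ : ℕ) ^ 2 * ((ℓ : ℕ) : ℂ) ^ (-s)) *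
          (1 - χ ((ℓ : ℕ) : ZMod Nχ) * (α (ℓ : ℕ) * β (ℓ : ℕ)) * ((ℓ : ℕ) : ℂ) ^ (-s)) ^ 2 *
          (1 - χ ((ℓ : ℕ) : ZMod Nχ) * β (ℓ : ℕ) ^ 2 * ((ℓ : ℕ) : ℂ) ^ (-s)))⁻¹ :=
  rankin_selberg_imprimitive_euler_product_general k α β hα hβ a ha1 haP haM Nχ χ s hs
end
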